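/- Let R be a connected quantized Weyl algebra over K generated by x_1,...,x_n with single parameter q (that is, every q_{ij} ∈ {q, q^{-1}}), and suppose q ≠ ±1. If i, j, k are distinct indices with r_{ij} ≠ 0 and r_{jk} ≠ 0, then r_{jℓ} = 0 for every ℓ ∈ {1,...,n} \ {i, j, k}. In other words, in the graph associated with the given presentation of R, every vertex has degree at most two. -/
import Mathlib


noncomputable section

open FreeAlgebra

/-- The defining relations `x_i x_j = q_{ij} x_j x_i + r_{ij}` (`i ≠ j`) of a
connected quantized Weyl algebra (generators indexed `0,…,n-1`). -/
inductive CQWRel (K : Type) [Field K] (n : ℕ) (q r : Fin n → Fin n → K) :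
    FreeAlgebra K (Fin n) → FreeAlgebra K (Fin n) → Prop
  | mk (i j : Fin n) (hij : i ≠ j) :
      CQWRel K n q r (ι K i * ι K j)
        (q i j • (ι K j * ι K i) + algebraMap K (FreeAlgebra K (Fin n)) (r i j))

/-- The standard monomial `x_1^{a_1} ⋯ x_n^{a_n}` (product taken in increasing index order). -/
def stdMonomial {R : Type} [Ring R] (n : ℕ) (x : Fin n → R) (a : Fin n → ℕ) : R :=
  ((List.finRange n).map (fun i => x i ^ a i)).prod

/-- The family of standard monomials (indexed by exponent vectors) is a `K`-basis of `R`. -/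
def IsMonBasis (K : Type) [Field K] {R : Type} [Ring R] [Algebra K R] (n : ℕ)
    (x : Fin n → R) : Prop :=
  LinearIndependent K (fun a : Fin n → ℕ => stdMonomial n x a) ∧
    Submodule.span K (Set.range (fun a : Fin n → ℕ => stdMonomial n x a)) = ⊤

/-- The graph on the generators, with an edge between `i` and `j` iff `r_{ij} ≠ 0`,
is connected. -/
def GraphConnected {K : Type} [Field K] (n : ℕ) (r : Fin n → Fin n → K) : Prop :=
  ∀ i j : Fin n, Relation.ReflTransGen (fun a b : Fin n => a ≠ b ∧ r a b ≠ 0) i j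


lemma stdMonomial_list {R : Type} [Ring R] {n : ℕ} (x : Fin n → R) (m : Fin n) :
    ∀ (L : List (Fin n)), L.Nodup → m ∈ L →
      (L.map fun i => x i ^ (Pi.single m 1 : Fin n → ℕ) i).prod = x m := by
  intro L
  induction L with
  | nil => simp
  | cons a t ih =>
    intro hnd hm
    rw [List.map_cons, List.prod_cons]
    rcases List.mem_cons.mp hm with h | h
    · have hnot : m ∉ t := h ▸ (List.nodup_cons.mp hnd).1
      have ht : (t.map fun i => x i ^ (Pi.single m 1 : Fin n → ℕ) i).prod = 1 := by
        apply List.prod_eq_one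
        intro y hy
        rcases List.mem_map.mp hy with ⟨z, hz, rfl⟩
        have hz' : z ≠ m := fun e => hnot (e ▸ hz)
        simp [Pi.single_apply, hz']
      rw [ht, mul_one, ← h]
      simp [← h, Pi.single_apply]
    · have hnd' := (List.nodup_cons.mp hnd).2
      have hane : a ≠ m := fun e => (List.nodup_cons.mp hnd).1 (e ▸ h)
      rw [ih hnd' h]
      simp [Pi.single_apply, hane]

lemma stdMonomial_single {R : Type} [Ring R] {n : ℕ} (x : Fin n → R) (m : Fin n) :
    stdMonomial n x (Pi.single m 1) = x m :=
  stdMonomial_list x m _ (List.nodup_finRange n) (List.mem_finRange m)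

lemma pi_single_one_inj {n : ℕ} {i j : Fin n}
    (h : (Pi.single i 1 : Fin n → ℕ) = Pi.single j 1) : i = j := by
  by_contra hne
  have h' := congrFun h i
  simp [Pi.single_apply, hne] at h'

lemma cqw_aux {K S : Type} [Field K] [Ring S] [Algebra K S] (a b c : S)
    (qji qki qkj rji rki rkj : K)
    (h1 : b * a = qji • (a * b) + algebraMap K S rji)
    (h2 : c * a = qki • (a * c) + algebraMap K S rki)
    (h3 : c * b = qkj • (b * c) + algebraMap K S rkj) :
    ((qkj * qki - 1) * rji) • c + ((qkj - qji) * rki) • b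
      + ((1 - qji * qki) * rkj) • a = 0 := by
  have hC : ∀ (t : K) (y : S), algebraMap K S t * y = t • y :=
    fun t y => (Algebra.smul_def t y).symm
  have hC' : ∀ (t : K) (y : S), y * algebraMap K S t = t • y := fun t y => by
    rw [← Algebra.commutes, Algebra.smul_def]
  have e1 : c * b * a
      = (qkj * (qki * qji)) • (a * (b * c)) + ((qkj * (qki * rji)) • c
        + ((qkj * rki) • b + rkj • a)) := by
    rw [h3, add_mul, smul_mul_assoc, hC, mul_assoc b c a, h2, mul_add, mul_smul_comm, hC',
        smul_add, smul_smul, smul_smul, ← mul_assoc b a c, h1, add_mul, smul_mul_assoc, hC,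
        smul_add, smul_smul, smul_smul, mul_assoc a b c]
    module
  have e2 : c * (b * a)
      = (qji * (qki * qkj)) • (a * (b * c)) + ((qji * (qki * rkj)) • a
        + ((qji * rki) • b + rji • c)) := by
    rw [h1, mul_add, mul_smul_comm, hC', ← mul_assoc c a b, h2, add_mul, smul_mul_assoc, hC,
        smul_add, smul_smul, smul_smul, mul_assoc a c b, h3, mul_add, mul_smul_comm, hC',
        smul_add, smul_smul, smul_smul]
    module
  have e5 : ((qkj * qki - 1) * rji) • c + ((qkj - qji) * rki) • b
      + ((1 - qji * qki) * rkj) • a = c * b * a - c * (b * a) := by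
    rw [e1, e2]; module
  rw [e5, mul_assoc, sub_self]


/-- Corollary 2.11: let `R` be a connected quantized Weyl algebra with single parameter
`q ≠ ±1` (every `q_{ij} ∈ {q, q⁻¹}`).  If `r_{ij} ≠ 0` and `r_{jk} ≠ 0` (with `i, j, k`
distinct) then `r_{jℓ} = 0` for every `ℓ ∉ {i, j, k}`; i.e. in the graph of the given
presentation every vertex has degree at most two. -/
theorem stmt2 (K : Type) [Field K] [IsAlgClosed K] (n : ℕ) (hn : 2 ≤ n)
    (q r : Fin n → Fin n → K) (q0 : K)
    (hq0 : ∀ i j : Fin n, i ≠ j → q i j ≠ 0)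
    (hqinv : ∀ i j : Fin n, i ≠ j → q j i = (q i j)⁻¹)
    (hrinv : ∀ i j : Fin n, i ≠ j → r j i = -(q i j)⁻¹ * r i j)
    (hbasis : IsMonBasis K n
      (fun i => RingQuot.mkAlgHom K (CQWRel K n q r) (ι K i)))
    (hconn : GraphConnected n r)
    (hsingle : ∀ i j : Fin n, i ≠ j → q i j = q0 ∨ q i j = q0⁻¹)
    (hq1 : q0 ≠ 1) (hqm1 : q0 ≠ -1) :
    ∀ i j k : Fin n, i ≠ j → j ≠ k → i ≠ k → r i j ≠ 0 → r j k ≠ 0 →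
      ∀ l : Fin n, l ≠ i → l ≠ j → l ≠ k → r j l = 0 := by
  intro i j k hij hjk hik hrij hrjk l hli hlj hlk
  by_contra hrjl
  set Xf : Fin n → RingQuot (CQWRel K n q r) :=
    fun i => RingQuot.mkAlgHom K (CQWRel K n q r) (ι K i) with hXf
  -- the defining relations in the quotient
  have hrel : ∀ a b : Fin n, a ≠ b →
      Xf a * Xf b = q a b • (Xf b * Xf a)
        + algebraMap K (RingQuot (CQWRel K n q r)) (r a b) := by
    intro a b hab
    have h := RingQuot.mkAlgHom_rel K (s := CQWRel K n q r) (CQWRel.mk a b hab)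
    simpa only [map_mul, map_add, map_smul, AlgHom.commutes] using h
  -- key coefficient relation from linear independence of standard monomials
  have K1 : ∀ a b c : Fin n, a ≠ b → b ≠ c → a ≠ c →
      (q c b * q c a - 1) * r b a = 0 := by
    intro a b c hab hbc hac
    have comb := cqw_aux (Xf a) (Xf b) (Xf c) (q b a) (q c a) (q c b) (r b a) (r c a) (r c b)
      (hrel b a (Ne.symm hab)) (hrel c a (Ne.symm hac)) (hrel c b (Ne.symm hbc))
    -- restrict the basis family to the three exponent vectors e_a, e_b, e_c
    have li := hbasis.1
    set f3 : Fin 3 → (Fin n → ℕ) :=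
      ![Pi.single a 1, Pi.single b 1, Pi.single c 1] with hf3
    have finj : Function.Injective f3 := by
      intro s t h
      fin_cases s <;> fin_cases t <;>
        simp only [hf3, Matrix.cons_val_zero, Matrix.cons_val_one, Matrix.head_cons,
          Matrix.cons_val_two, Matrix.tail_cons] at h <;>
        first
          | rfl
          | exact absurd (pi_single_one_inj h)
              (by first | exact hab | exact hbc | exact hac
                        | exact Ne.symm hab | exact Ne.symm hbc | exact Ne.symm hac)
    have hli3 := Fintype.linearIndependent_iff.mp (li.comp f3 finj)
    have hzero := hli3
      ![(1 - q b a * q c a) * r c b, (q c b - q b a) * r c a, (q c b * q c a - 1) * r b a]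
      (by
        rw [Fin.sum_univ_three]
        simp only [Function.comp, hf3, Matrix.cons_val_zero, Matrix.cons_val_one,
          Matrix.head_cons, Matrix.cons_val_two, Matrix.tail_cons, stdMonomial_single]
        linear_combination (norm := module) comb)
    have := hzero 2
    simpa using this
  have key2 : ∀ a b c : Fin n, a ≠ b → c ≠ a → c ≠ b → r a b ≠ 0 →
      q c a * q c b = 1 := by
    intro a b c hab hca hcb hr
    have h := K1 b a c (Ne.symm hab) (Ne.symm hca) (Ne.symm hcb)
    rcases mul_eq_zero.mp h with h' | h'
    · exact sub_eq_zero.mp h'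
    · exact absurd h' hr
  -- gather the six relations
  have F1 : q i j * q i k = 1 := key2 j k i hjk hij hik hrjk
  have F2 : q i j * q i l = 1 := key2 j l i (Ne.symm hlj) hij (Ne.symm hli) hrjl
  have F3 : q k i * q k j = 1 := key2 i j k hij (Ne.symm hik) (Ne.symm hjk) hrij
  have F4 : q k j * q k l = 1 := key2 j l k (Ne.symm hlj) (Ne.symm hjk) (Ne.symm hlk) hrjl
  have F5 : q l i * q l j = 1 := key2 i j l hij hli hlj hrij
  have F6 : q l j * q l k = 1 := key2 j k l hjk hlj hlk hrjk
  have hikil : q i k = q i l :=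
    mul_left_cancel₀ (hq0 i j hij) (F1.trans F2.symm)
  have hkikl : q k i = q k l := by
    have h1 : q k i = (q k j)⁻¹ := eq_inv_of_mul_eq_one_left F3
    have h2 : q k l = (q k j)⁻¹ := eq_inv_of_mul_eq_one_right F4
    rw [h1, h2]
  have hlilk : q l i = q l k := by
    have h1 : q l i = (q l j)⁻¹ := eq_inv_of_mul_eq_one_left F5
    have h2 : q l k = (q l j)⁻¹ := eq_inv_of_mul_eq_one_right F6
    rw [h1, h2]
  -- derive q l i = (q l i)⁻¹
  have hli0 : q l i ≠ 0 := hq0 l i hli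
  have hinv : q l i = (q l i)⁻¹ := by
    have e1 : q l i = q k i := by
      rw [hqinv i l (Ne.symm hli), hqinv i k hik, hikil]
    have e2 : q k l = (q l k)⁻¹ := hqinv l k hlk
    calc q l i = q k l := e1.trans hkikl
      _ = (q l k)⁻¹ := e2
      _ = (q l i)⁻¹ := by rw [hlilk]
  have hsq : q l i * q l i = 1 := by
    nth_rewrite 2 [hinv]
    exact mul_inv_cancel₀ hli0
  have hq00 : q0 ≠ 0 := by
    rcases hsingle l i hli with h | h
    · exact h ▸ hli0
    · intro h0; rw [h, h0] at hli0; simp at hli0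
  have hq0sq : q0 * q0 = 1 := by
    rcases hsingle l i hli with h | h
    · rw [h] at hsq; exact hsq
    · rw [h] at hsq
      have hsq' : (q0 * q0)⁻¹ = 1 := by rw [mul_inv]; exact hsq
      rw [← inv_inv (q0 * q0), hsq', inv_one]
  rcases mul_self_eq_one_iff.mp hq0sq with h | h
  · exact hq1 h
  · exact hqm1 h


end
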